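/- Let n = 2 and μ = a_1 δ_{y_1} + a_2 δ_{y_2} with distinct y_1, y_2 ∈ I(2, Ω) and nonzero a_1, a_2 ∈ ℂ, and let Y(ω) = F[μ](ω) + W(ω), ω ∈ [−Ω, Ω], with |W(ω)| < σ for all ω ∈ [−Ω, Ω]. Assume σ/m_min ≤ 1/4. If |y_1 − y_2| ≥ (2/Ω) · arcsin(2·(σ/m_min)^{1/2}), then there does not exist any σ-admissible measure of Y with only one support point; that is, there exist no ŷ ∈ ℝ and â ∈ ℂ such that |â e^{i ŷ ω} − Y(ω)| < σ for all ω ∈ [−Ω, Ω]. -/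

import Mathlib

/-!
If a single spike `â δ_ŷ` were σ-admissible, the residual
`g ω = â e^{iŷω} - a₁ e^{iy₁ω} - a₂ e^{iy₂ω}` would be smaller than `2σ` on `[-Ω, Ω]`.
The second-order difference filter of step `h ≤ Ω` that annihilates the modes `ŷ` and `y₂`
turns `g` into `a₁ (e^{iy₁h} - e^{iŷh}) (e^{iy₁h} - e^{iy₂h}) e^{iy₁ω}`, whose modulus
`4 |a₁| |sin ((y₁ - ŷ) h / 2)| |sin ((y₁ - y₂) h / 2)|` is therefore below `8σ`; symmetrically for
`a₂`. The separation lets us choose `h` with `|sin ((y₁ - y₂) h / 2)| = s := 2 √(σ / m_min)`,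
and then both `|sin ((yⱼ - ŷ) h / 2)| < s / 2`, contradicting
`|sin ((y₁ - y₂) h / 2)| ≤ |sin ((y₁ - ŷ) h / 2)| + |sin ((y₂ - ŷ) h / 2)|`.
-/

namespace NumberDetection

open Complex

-- `expI t ω` is the Fourier transform `F[δ_t](ω)` of a unit spike at `t`.
noncomputable def expI (t ω : ℝ) : ℂ := exp (I * t * ω)

lemma norm_expI (t ω : ℝ) : ‖expI t ω‖ = 1 := by
  rw [expI, show I * t * ω = I * ↑(t * ω) by push_cast; ring, norm_exp_I_mul_ofReal]

lemma expI_add (t ω h : ℝ) : expI t (ω + h) = expI t ω * expI t h := by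
  simp only [expI, ← Complex.exp_add]
  push_cast; ring_nf

lemma norm_expI_sub_expI (t u h : ℝ) :
    ‖expI t h - expI u h‖ = 2 * |Real.sin ((t - u) * h / 2)| := by
  have hfac : expI t h - expI u h = expI u h * (exp (I * ↑((t - u) * h)) - 1) := by
    simp only [expI, mul_sub, mul_one, ← Complex.exp_add]
    push_cast; ring_nf
  rw [hfac, norm_mul, norm_expI, one_mul, norm_exp_I_mul_ofReal_sub_one, Real.norm_eq_abs,
    abs_mul, abs_two]

lemma norm_second_difference_lt {g : ℝ → ℂ} {z w : ℂ} (hz : ‖z‖ ≤ 1) (hw : ‖w‖ ≤ 1)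
    {ω h ε : ℝ} (h₀ : ‖g ω‖ < ε) (h₁ : ‖g (ω + h)‖ < ε) (h₂ : ‖g (ω + h + h)‖ < ε) :
    ‖g (ω + h + h) - (z + w) * g (ω + h) + z * w * g ω‖ < 4 * ε := by
  have hzw : ‖z + w‖ ≤ 2 := (norm_add_le z w).trans (by linarith)
  have hzw' : ‖z‖ * ‖w‖ ≤ 1 := mul_le_one₀ hz (norm_nonneg w) hw
  calc _ ≤ ‖g (ω + h + h)‖ + ‖z + w‖ * ‖g (ω + h)‖ + ‖z‖ * ‖w‖ * ‖g ω‖ := by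
        grw [norm_add_le, norm_sub_le, norm_mul, norm_mul, norm_mul]
    _ < 4 * ε := by
        nlinarith [norm_nonneg (g (ω + h)), norm_nonneg (g ω), norm_nonneg (z + w),
          mul_nonneg (norm_nonneg z) (norm_nonneg w)]

-- The shift polynomial `(z - expI t₀ h) (z - expI t₂ h)` annihilates the modes `t₀` and `t₂`.
lemma second_difference_of_expSum {g : ℝ → ℂ} {c₀ c₁ c₂ : ℂ} {t₀ t₁ t₂ : ℝ}
    (hg : ∀ ω, g ω = c₀ * expI t₀ ω + c₁ * expI t₁ ω + c₂ * expI t₂ ω) (ω h : ℝ) :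
    g (ω + h + h) - (expI t₀ h + expI t₂ h) * g (ω + h) + expI t₀ h * expI t₂ h * g ω
      = c₁ * (expI t₁ h - expI t₀ h) * (expI t₁ h - expI t₂ h) * expI t₁ ω := by
  simp only [hg, expI_add]
  ring

lemma norm_mul_abs_sin_mul_abs_sin_lt {Ω ε h : ℝ} (hh₀ : 0 ≤ h) (hhΩ : h ≤ Ω) {c₀ c₁ c₂ : ℂ}
    {t₀ t₁ t₂ : ℝ}
    (hg : ∀ ω ∈ Set.Icc (-Ω) Ω, ‖c₀ * expI t₀ ω + c₁ * expI t₁ ω + c₂ * expI t₂ ω‖ < ε) :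
    ‖c₁‖ * |Real.sin ((t₁ - t₀) * h / 2)| * |Real.sin ((t₁ - t₂) * h / 2)| < ε := by
  have hlt := norm_second_difference_lt
    (g := fun ω => c₀ * expI t₀ ω + c₁ * expI t₁ ω + c₂ * expI t₂ ω)
    (norm_expI t₀ h).le (norm_expI t₂ h).le
    (hg (-Ω) ⟨le_rfl, by linarith⟩) (hg (-Ω + h) ⟨by linarith, by linarith⟩)
    (hg (-Ω + h + h) ⟨by linarith, by linarith⟩)
  rw [second_difference_of_expSum (fun _ => rfl), norm_mul, norm_mul, norm_mul, norm_expI,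
    mul_one, norm_expI_sub_expI, norm_expI_sub_expI] at hlt
  linarith

lemma exists_abs_sin_mul_eq {D s Ω : ℝ} (hΩ : 0 < Ω) (hs₀ : 0 ≤ s) (hs₁ : s ≤ 1)
    (hsep : 2 / Ω * Real.arcsin s ≤ |D|) :
    ∃ h, 0 ≤ h ∧ h ≤ Ω ∧ |Real.sin (D * h / 2)| = s := by
  rcases eq_or_ne D 0 with rfl | hD
  · refine ⟨0, le_rfl, hΩ.le, ?_⟩
    rw [abs_zero] at hsep
    have hs : s = 0 := le_antisymm
      (Real.arcsin_nonpos.1 (nonpos_of_mul_nonpos_right hsep (by positivity))) hs₀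
    simp [hs]
  · refine ⟨2 * Real.arcsin s / |D|,
      div_nonneg (mul_nonneg zero_le_two (Real.arcsin_nonneg.2 hs₀)) (abs_nonneg D), ?_, ?_⟩
    · rw [div_le_iff₀ (abs_pos.2 hD)]
      rw [div_mul_eq_mul_div, div_le_iff₀ hΩ] at hsep
      linarith
    · have hsin : Real.sin (Real.arcsin s) = s := Real.sin_arcsin (by linarith) hs₁
      rcases abs_choice D with hD' | hD' <;> rw [hD']
      · rw [show D * (2 * Real.arcsin s / D) / 2 = Real.arcsin s by field_simp, hsin,
          abs_of_nonneg hs₀]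
      · rw [show D * (2 * Real.arcsin s / -D) / 2 = -Real.arcsin s by field_simp, Real.sin_neg,
          abs_neg, hsin, abs_of_nonneg hs₀]

lemma abs_sin_sub_le (x y : ℝ) : |Real.sin (x - y)| ≤ |Real.sin x| + |Real.sin y| := by
  rw [Real.sin_sub]
  calc _ ≤ |Real.sin x| * |Real.cos y| + |Real.cos x| * |Real.sin y| := by
        rw [← abs_mul, ← abs_mul]; exact abs_sub _ _
    _ ≤ |Real.sin x| + |Real.sin y| := by
        gcongr
        · exact mul_le_of_le_one_right (abs_nonneg _) (Real.abs_cos_le_one y)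
        · exact mul_le_of_le_one_left (abs_nonneg _) (Real.abs_cos_le_one x)

end NumberDetection

open NumberDetection

theorem number_detection_stability_two_points
    (Ω σ : ℝ) (hΩ : 0 < Ω) (hσ : 0 < σ)
    (y₁ y₂ : ℝ)
    (a₁ a₂ : ℂ) (ha₁ : a₁ ≠ 0) (ha₂ : a₂ ≠ 0)
    (mmin : ℝ) (hmmin : mmin = min ‖a₁‖ ‖a₂‖)
    (hratio : σ / mmin ≤ 1 / 4)
    (W : ℝ → ℂ) (hW : ∀ ω ∈ Set.Icc (-Ω) Ω, ‖W ω‖ < σ)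
    (hsep : 2 / Ω * Real.arcsin (2 * Real.sqrt (σ / mmin)) ≤ |y₁ - y₂|) :
    ¬ ∃ (yh : ℝ) (ah : ℂ), ∀ ω ∈ Set.Icc (-Ω) Ω,
        ‖ah * Complex.exp (Complex.I * (yh : ℂ) * (ω : ℂ))
            - (a₁ * Complex.exp (Complex.I * (y₁ : ℂ) * (ω : ℂ))
              + a₂ * Complex.exp (Complex.I * (y₂ : ℂ) * (ω : ℂ)) + W ω)‖ < σ := by
  rintro ⟨yh, ah, hadm⟩
  have hm : 0 < mmin := hmmin ▸ lt_min (norm_pos_iff.2 ha₁) (norm_pos_iff.2 ha₂)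
  set s := 2 * Real.sqrt (σ / mmin)
  have hs₀ : 0 < s := by positivity
  have hs₁ : s ≤ 1 := by
    have : Real.sqrt (σ / mmin) ≤ 1 / 2 := Real.sqrt_le_iff.2 ⟨by norm_num, by linarith⟩
    linarith
  have hms : mmin * s ^ 2 = 4 * σ := by
    rw [mul_pow, Real.sq_sqrt (by positivity)]; field_simp; ring
  obtain ⟨h, hh₀, hhΩ, hsin⟩ := exists_abs_sin_mul_eq hΩ hs₀.le hs₁ hsep
  have hres : ∀ ω ∈ Set.Icc (-Ω) Ω,
      ‖ah * expI yh ω + -a₁ * expI y₁ ω + -a₂ * expI y₂ ω‖ < 2 * σ := fun ω hω =>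
    calc _ = ‖(ah * expI yh ω - (a₁ * expI y₁ ω + a₂ * expI y₂ ω + W ω)) + W ω‖ := by ring_nf
      _ < σ + σ := (norm_add_le _ _).trans_lt (add_lt_add (hadm ω hω) (hW ω hω))
      _ = 2 * σ := by ring
  have h₁ := norm_mul_abs_sin_mul_abs_sin_lt hh₀ hhΩ hres
  have h₂ := norm_mul_abs_sin_mul_abs_sin_lt hh₀ hhΩ fun ω hω =>
    (add_right_comm (ah * expI yh ω) _ _) ▸ hres ω hω
  rw [norm_neg, hsin] at h₁
  rw [norm_neg, show (y₂ - y₁) * h / 2 = -((y₁ - y₂) * h / 2) by ring, Real.sin_neg, abs_neg,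
    hsin] at h₂
  have htri := abs_sin_sub_le ((y₁ - yh) * h / 2) ((y₂ - yh) * h / 2)
  rw [show (y₁ - yh) * h / 2 - (y₂ - yh) * h / 2 = (y₁ - y₂) * h / 2 by ring, hsin] at htri
  have hA : mmin * |Real.sin ((y₁ - yh) * h / 2)| * s < 2 * σ :=
    lt_of_le_of_lt (by gcongr; exact hmmin ▸ min_le_left _ _) h₁
  have hB : mmin * |Real.sin ((y₂ - yh) * h / 2)| * s < 2 * σ :=
    lt_of_le_of_lt (by gcongr; exact hmmin ▸ min_le_right _ _) h₂
  nlinarith [mul_pos hm hs₀]
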